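/- Consider misère NimG-RM on a graph G with a loop on every vertex and strictly positive weight function w, starting at a vertex u with w(u) = 1. Let T = {v ∈ V(G) : w(v) ≥ 2} and let C_u be the connected component of u in the graph G ∖ T (vertices of T deleted). Then the misère outcome of (G,u,w) equals the misère outcome of (C_u,u,w restricted to C_u); in particular any move leaving C_u is a losing move. -/

import Mathlib

universe u
mutual
  inductive GNormalWin {α : Type u} (moves : α → α → Prop) : α → Prop
    | step {p q : α} : moves p q → GNormalLose moves q → GNormalWin moves p
  inductive GNormalLose {α : Type u} (moves : α → α → Prop) : α → Prop
    | intro {p : α} : (∀ q, moves p q → GNormalWin moves q) → GNormalLose moves p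
end

mutual
  inductive GMisereWin {α : Type u} (moves : α → α → Prop) : α → Prop
    | terminal {p : α} : (∀ q, ¬ moves p q) → GMisereWin moves p
    | step {p q : α} : moves p q → GMisereLose moves q → GMisereWin moves p
  inductive GMisereLose {α : Type u} (moves : α → α → Prop) : α → Prop
    | intro {p q₀ : α} : moves p q₀ → (∀ q, moves p q → GMisereWin moves q) → GMisereLose moves p
end

def nimMove {V : Type u} (adj : V → V → Prop) (p q : V × (V → ℕ)) : Prop :=
  adj p.1 q.1 ∧ q.2 p.1 < p.2 p.1 ∧ ∀ v, v ≠ p.1 → q.2 v = p.2 v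

mutual
  inductive NimRMWin {V : Type u} (adj : V → V → Prop) : V × (V → ℕ) → Prop
    | zero {p} : p.2 p.1 = 0 → NimRMWin adj p
    | step {p q} : nimMove adj p q → NimRMLose adj q → NimRMWin adj p
  inductive NimRMLose {V : Type u} (adj : V → V → Prop) : V × (V → ℕ) → Prop
    | intro {p} : p.2 p.1 ≠ 0 → (∀ q, nimMove adj p q → NimRMWin adj q) → NimRMLose adj p
end

def vgMove {V : Type u} (A : V → V → Prop) (p q : Set V × V) : Prop :=
  A p.2 q.2 ∧ q.2 ∈ p.1 ∧ q.2 ≠ p.2 ∧ q.1 = p.1 \ {p.2}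

def addOut {V : Type u} (A : V → V → Prop) : V ⊕ V → V ⊕ V → Prop
  | .inl a, .inl b => A a b
  | .inl a, .inr b => a = b
  | _, _ => False

def MaxMatching {V : Type u} (G : SimpleGraph V) (M : G.Subgraph) : Prop :=
  M.IsMatching ∧ ∀ N : G.Subgraph, N.IsMatching → N.edgeSet.ncard ≤ M.edgeSet.ncard

/-- The graph `G` with all vertices of weight at least 2 deleted. -/
def delHeavy {V : Type u} (G : SimpleGraph V) (w : V → ℕ) : SimpleGraph V where
  Adj a b := G.Adj a b ∧ w a < 2 ∧ w b < 2
  symm := ⟨fun a b h => ⟨h.1.symm, h.2.2, h.2.1⟩⟩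
  loopless := ⟨fun a h => G.loopless.irrefl a h.1⟩

/-!
A position on a vertex of weight at least 2 carrying a loop is a first-player win by strategy
stealing: either lowering the weight to 1 and staying put is a winning move, or some move from the
weight-1 position wins, and that move is also available from the original position. Now let `R` be
the component of `u` in `G` minus the heavy vertices, and play from a vertex of `R` while all
weights on `R` are at most 1 and all other weights are untouched. A move must lower the current
weight from 1 to 0, so staying put or moving onto a heavy vertex hands the opponent a win. Every
sensible move therefore goes to a neighbour in `R`, and these are exactly the moves of the
restricted game; induction on the total weight finishes the argument.
-/

section Determinacy

variable {V : Type*} [Fintype V] {adj : V → V → Prop}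

theorem nimMove_sum_lt {p q : V × (V → ℕ)} (h : nimMove adj p q) : ∑ v, q.2 v < ∑ v, p.2 v := by
  refine Finset.sum_lt_sum (fun v _ => ?_) ⟨p.1, Finset.mem_univ _, h.2.1⟩
  by_cases hv : v = p.1
  · exact hv ▸ h.2.1.le
  · exact (h.2.2 v hv).le

variable (adj) in
theorem wellFounded_nimMove : WellFounded (flip (nimMove adj)) :=
  (InvImage.wf (fun p : V × (V → ℕ) => ∑ v, p.2 v) wellFounded_lt).mono
    fun _ _ h => nimMove_sum_lt h

theorem NimRMLose.not_nimRMWin {p : V × (V → ℕ)} (h : NimRMLose adj p) : ¬ NimRMWin adj p := by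
  induction p using (wellFounded_nimMove adj).induction with
  | _ p ih =>
    intro hwin
    obtain ⟨hne, hall⟩ := h
    cases hwin with
    | zero h0 => exact hne h0
    | step hm hlose => exact ih _ hm hlose (hall _ hm)

theorem nimRMWin_or_nimRMLose (p : V × (V → ℕ)) : NimRMWin adj p ∨ NimRMLose adj p := by
  induction p using (wellFounded_nimMove adj).induction with
  | _ p ih =>
    by_cases h0 : p.2 p.1 = 0
    · exact .inl (.zero h0)
    by_cases hmove : ∃ q, nimMove adj p q ∧ NimRMLose adj q
    · obtain ⟨q, hm, hlose⟩ := hmove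
      exact .inl (.step hm hlose)
    push Not at hmove
    exact .inr (.intro h0 fun q hm => (ih q hm).resolve_right (hmove q hm))

theorem nimRMWin_iff {p : V × (V → ℕ)} :
    NimRMWin adj p ↔ p.2 p.1 = 0 ∨ ∃ q, nimMove adj p q ∧ ¬ NimRMWin adj q := by
  constructor
  · rintro (h0 | ⟨hm, hlose⟩)
    · exact .inl h0
    · exact .inr ⟨_, hm, hlose.not_nimRMWin⟩
  · rintro (h0 | ⟨q, hm, hq⟩)
    · exact .zero h0
    · exact .step hm ((nimRMWin_or_nimRMLose q).resolve_left hq)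

end Determinacy

section WeightOne

variable {V : Type*} [DecidableEq V] {adj : V → V → Prop}

theorem nimMove_update {x y : V} {w : V → ℕ} {k : ℕ} (hxy : adj x y) (hk : k < w x) :
    nimMove adj (x, w) (y, Function.update w x k) :=
  ⟨hxy, by simpa using hk, fun _ hv => Function.update_of_ne hv _ _⟩

theorem nimMove_iff_of_eq_one {x : V} {w : V → ℕ} (hx : w x = 1) {q : V × (V → ℕ)} :
    nimMove adj (x, w) q ↔ adj x q.1 ∧ q.2 = Function.update w x 0 := by
  constructor
  · rintro ⟨hxy, hlt, hrest⟩
    refine ⟨hxy, funext fun v => ?_⟩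
    by_cases hv : v = x
    · subst hv
      simp only [Function.update_self]
      simp only [hx] at hlt
      omega
    · rw [hrest v hv, Function.update_of_ne hv]
  · rintro ⟨hxy, hq⟩
    rw [← Prod.mk.eta (p := q), hq]
    exact nimMove_update hxy (by omega)

theorem nimRMWin_iff_of_eq_one [Fintype V] {x : V} {w : V → ℕ} (hx : w x = 1) :
    NimRMWin adj (x, w) ↔ ∃ y, adj x y ∧ ¬ NimRMWin adj (y, Function.update w x 0) := by
  simp only [nimRMWin_iff (p := (x, w)), hx, one_ne_zero, false_or, nimMove_iff_of_eq_one hx]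
  exact ⟨fun ⟨q, ⟨hxy, hq⟩, hlose⟩ => ⟨q.1, hxy, hq ▸ hlose⟩,
    fun ⟨y, hxy, hlose⟩ => ⟨(y, _), ⟨hxy, rfl⟩, hlose⟩⟩

end WeightOne

theorem nimRMWin_of_two_le {V : Type*} [Fintype V] {adj : V → V → Prop} {x : V} {w : V → ℕ}
    (hloop : adj x x) (hx : 2 ≤ w x) : NimRMWin adj (x, w) := by
  classical
  by_cases hone : NimRMWin adj (x, Function.update w x 1)
  · obtain ⟨y, hxy, hlose⟩ := (nimRMWin_iff_of_eq_one (Function.update_self x 1 w)).1 hone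
    rw [Function.update_idem] at hlose
    exact nimRMWin_iff.2 (.inr ⟨_, nimMove_update hxy (by omega), hlose⟩)
  · exact nimRMWin_iff.2 (.inr ⟨_, nimMove_update hloop (by omega), hone⟩)

section DelHeavy

variable {V : Type*} {G : SimpleGraph V} {w : V → ℕ} {u : V}

theorem delHeavy_reachable_lt_two (hu : w u < 2) {v : V} (h : (delHeavy G w).Reachable u v) :
    w v < 2 := by
  obtain ⟨p⟩ := h
  induction p with
  | nil => exact hu
  | cons hadj _ ih => exact ih hadj.2.2

theorem delHeavy_reachable_of_adj (hu : w u < 2) {x y : V} (hx : (delHeavy G w).Reachable u x)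
    (hxy : G.Adj x y) (hy : w y < 2) : (delHeavy G w).Reachable u y :=
  hx.trans (SimpleGraph.Adj.reachable ⟨hxy, delHeavy_reachable_lt_two hu hx, hy⟩)

variable [Fintype V]

theorem nimRMWin_loops_iff_component (hu : w u < 2) (p : V × (V → ℕ))
    (hx : (delHeavy G w).Reachable u p.1) (hle : p.2 ≤ w)
    (hout : ∀ v, ¬ (delHeavy G w).Reachable u v → p.2 v = w v) :
    NimRMWin (fun a b => G.Adj a b ∨ a = b) p ↔
      NimRMWin (fun a b => ((delHeavy G w).Adj a b ∨ a = b) ∧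
        (delHeavy G w).Reachable u a ∧ (delHeavy G w).Reachable u b) p := by
  classical
  induction p using (wellFounded_nimMove fun a b => G.Adj a b ∨ a = b).induction with
  | _ p ih =>
    obtain ⟨x, w'⟩ := p
    simp only at hx hle hout
    have hx1 : w' x ≤ 1 := Nat.le_of_lt_succ ((hle x).trans_lt (delHeavy_reachable_lt_two hu hx))
    obtain h0 | h1 : w' x = 0 ∨ w' x = 1 := by omega
    · exact iff_of_true (.zero h0) (.zero h0)
    rw [nimRMWin_iff_of_eq_one h1, nimRMWin_iff_of_eq_one h1]
    set w₀ := Function.update w' x 0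
    have hw₀x : w₀ x = 0 := Function.update_self x 0 w'
    have hw₀ : ∀ y, y ≠ x → w₀ y = w' y := fun y hy => Function.update_of_ne hy 0 w'
    have hw₀le : w₀ ≤ w := fun v => by
      by_cases hv : v = x
      · simp [hv, hw₀x]
      · exact hw₀ v hv ▸ hle v
    have hw₀out : ∀ v, ¬ (delHeavy G w).Reachable u v → w₀ v = w v := fun v hv =>
      (hw₀ v fun h => hv (h ▸ hx)).trans (hout v hv)
    constructor
    · rintro ⟨y, hxy | rfl, hlose⟩
      · by_cases hy : (delHeavy G w).Reachable u y
        · refine ⟨y, ⟨.inl ⟨hxy, delHeavy_reachable_lt_two hu hx,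
            delHeavy_reachable_lt_two hu hy⟩, hx, hy⟩, ?_⟩
          rwa [← ih (y, w₀) (nimMove_update (.inl hxy) (h1 ▸ one_pos)) hy hw₀le hw₀out]
        · -- `y` is heavy, since a light neighbour of `x` would lie in the component
          refine absurd (nimRMWin_of_two_le (.inr rfl) ?_) hlose
          rw [hw₀out y hy]
          by_contra! hy2
          exact hy (delHeavy_reachable_of_adj hu hx hxy hy2)
      · exact absurd (.zero hw₀x) hlose
    · rintro ⟨y, ⟨hxy | rfl, -, hy⟩, hlose⟩
      · refine ⟨y, .inl hxy.1, ?_⟩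
        rwa [ih (y, w₀) (nimMove_update (.inl hxy.1) (h1 ▸ one_pos)) hy hw₀le hw₀out]
      · exact absurd (.zero hw₀x) hlose

end DelHeavy

/-- Misère NimG-RM with loops everywhere, starting on a weight-1 vertex: the outcome equals
the outcome of the game restricted to the connected component of `u` in `G` minus the
vertices of weight at least 2. -/
theorem stmt6 {V : Type} [Fintype V] (G : SimpleGraph V) (w : V → ℕ) (hw : ∀ v, 0 < w v)
    (u : V) (h1 : w u = 1) :
    (NimRMWin (fun a b => G.Adj a b ∨ a = b) (u, w) ↔
      NimRMWin (fun a b => ((delHeavy G w).Adj a b ∨ a = b) ∧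
        (delHeavy G w).Reachable u a ∧ (delHeavy G w).Reachable u b) (u, w)) :=
  nimRMWin_loops_iff_component (h1.trans_lt one_lt_two) (u, w) .rfl le_rfl fun _ _ => rfl
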